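/- There exists a constant c > 0 such that for every integer n ≥ 2, every deterministic online sorting strategy s for array size n, and every integer 1 ≤ i ≤ n, the following holds: if x is an input of n i.i.d. uniform samples from [0,1] and j is chosen uniformly at random from {1,...,n−1}, independently of x, then Pr[T_j(s,x) > n−i or T_{j+1}(s,x) > n−i] ≥ c·i/n, where T_j(s,x) denotes the time at which cell j is filled. -/
import Mathlib


open MeasureTheory
open scoped ENNReal

/-- The distribution of `n` i.i.d. uniform samples from `[0,1]`. -/
noncomputable def uniformCube (n : ℕ) : Measure (Fin n → ℝ) :=
  Measure.pi fun _ => (volume : Measure ℝ).restrict (Set.Icc 0 1)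

/-- A deterministic online sorting strategy for array size `n`: upon arrival of the
`(k+1)`-st item, it is placed into cell `place x k`, which depends only on the first
`k+1` items and is distinct from all previously used cells. -/
structure OnlineStrategy (n : ℕ) where
  place : (Fin n → ℝ) → Fin n → Fin n
  online : ∀ x y : Fin n → ℝ, ∀ k : Fin n,
    (∀ i : Fin n, i ≤ k → x i = y i) → place x k = place y k
  inj : ∀ x : Fin n → ℝ, Function.Injective (place x)
  meas : ∀ k : Fin n, Measurable fun x => place x k

/-- The final array produced by the strategy (cells indexed `0,…,n-1`):
cell `j` holds the item inserted at the unique time `k` with `place x k = j`. -/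
noncomputable def strategyArr {n : ℕ} (S : OnlineStrategy n) (x : Fin n → ℝ) (j : ℕ) : ℝ :=
  if h : j < n then
    haveI : Nonempty (Fin n) := ⟨⟨j, h⟩⟩
    x (Function.invFun (S.place x) ⟨j, h⟩)
  else 0

/-- The cost: the sum of absolute differences between adjacent cells. -/
noncomputable def strategyCost {n : ℕ} (S : OnlineStrategy n) (x : Fin n → ℝ) : ℝ :=
  ∑ j ∈ Finset.range (n - 1), |strategyArr S x (j + 1) - strategyArr S x j|

/-- The time (0-indexed, in `{0,…,n-1}`) at which cell `j` is filled, i.e. the unique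
`k` with `place x k = j`. (Cell `j` out of range gets the junk value `0`.) -/
noncomputable def fillTime {n : ℕ} (S : OnlineStrategy n) (x : Fin n → ℝ) (j : ℕ) : ℕ :=
  if h : j < n then
    haveI : Nonempty (Fin n) := ⟨⟨j, h⟩⟩
    Fin.val (Function.invFun (S.place x) ⟨j, h⟩)
  else 0

/-- The uniform distribution on `Fin m`. -/
noncomputable def uniformFin (m : ℕ) : MeasureTheory.Measure (Fin m) :=
  (m : ℝ≥0∞)⁻¹ • MeasureTheory.Measure.count

/-! ### Auxiliary lemmas -/

lemma fillTime_eq_iff {n : ℕ} (S : OnlineStrategy n) (x : Fin n → ℝ) {j : ℕ} (hj : j < n)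
    (k : Fin n) : fillTime S x j = k.val ↔ S.place x k = ⟨j, hj⟩ := by
  haveI : Nonempty (Fin n) := ⟨⟨j, hj⟩⟩
  have hbij : Function.Bijective (S.place x) :=
    (Finite.injective_iff_bijective).mp (S.inj x)
  have h1 : S.place x (Function.invFun (S.place x) ⟨j, hj⟩) = ⟨j, hj⟩ :=
    Function.invFun_eq (hbij.surjective ⟨j, hj⟩)
  simp only [fillTime, dif_pos hj]
  constructor
  · intro h
    have h2 : Function.invFun (S.place x) ⟨j, hj⟩ = k := Fin.ext h
    rwa [h2] at h1
  · intro h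
    have h2 : Function.invFun (S.place x) ⟨j, hj⟩ = k := S.inj x (by rw [h1, h])
    rw [h2]

lemma fillTime_lt {n : ℕ} (S : OnlineStrategy n) (x : Fin n → ℝ) {j : ℕ} (hj : j < n) :
    fillTime S x j < n := by
  haveI : Nonempty (Fin n) := ⟨⟨j, hj⟩⟩
  simp only [fillTime, dif_pos hj]
  exact (Function.invFun (S.place x) ⟨j, hj⟩).isLt

lemma measurable_fillTime {n : ℕ} (S : OnlineStrategy n) (j : ℕ) :
    Measurable fun x => fillTime S x j := by
  apply measurable_to_countable'
  intro m
  by_cases hj : j < n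
  · by_cases hm : m < n
    · have : (fun x => fillTime S x j) ⁻¹' {m} =
          (fun x => S.place x ⟨m, hm⟩) ⁻¹' {(⟨j, hj⟩ : Fin n)} := by
        ext x
        simp only [Set.mem_preimage, Set.mem_singleton_iff]
        exact fillTime_eq_iff S x hj ⟨m, hm⟩
      rw [this]
      exact (S.meas ⟨m, hm⟩) (measurableSet_singleton _)
    · have : (fun x => fillTime S x j) ⁻¹' {m} = ∅ := by
        ext x
        simp only [Set.mem_preimage, Set.mem_singleton_iff, Set.mem_empty_iff_false,
          iff_false]
        intro h
        exact hm (h ▸ fillTime_lt S x hj)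
      rw [this]; exact MeasurableSet.empty
  · have : (fun x => fillTime S x j) ⁻¹' {m} = if 0 = m then Set.univ else ∅ := by
      ext x
      simp only [Set.mem_preimage, Set.mem_singleton_iff, fillTime, dif_neg hj]
      split <;> simp_all
    rw [this]
    split <;> simp

/-- The key counting lemma: for every input `x`, at least `i/2` of the adjacent pairs
have one cell filled at time `≥ n - i`. -/
lemma card_bad_pairs {n : ℕ} (hn : 2 ≤ n) (S : OnlineStrategy n) (x : Fin n → ℝ)
    {i : ℕ} (hi1 : 1 ≤ i) (hin : i ≤ n) :
    i ≤ 2 * (Finset.univ.filter (fun j : Fin (n - 1) =>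
      n - i ≤ fillTime S x (j : ℕ) ∨ n - i ≤ fillTime S x ((j : ℕ) + 1))).card := by
  classical
  haveI : Nonempty (Fin n) := ⟨⟨0, by omega⟩⟩
  set B := Finset.univ.filter (fun j : Fin (n - 1) =>
      n - i ≤ fillTime S x (j : ℕ) ∨ n - i ≤ fillTime S x ((j : ℕ) + 1)) with hB
  -- the set of "late" cells
  set L : Finset (Fin n) := Finset.univ.filter (fun c : Fin n => n - i ≤ fillTime S x c.val)
    with hL
  -- fillTime as a function of the cell is a bijection onto {0,…,n-1}
  have hbij : Function.Bijective (S.place x) :=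
    (Finite.injective_iff_bijective).mp (S.inj x)
  have hft : ∀ k : Fin n, fillTime S x ((S.place x k) : ℕ) = k.val := by
    intro k
    exact (fillTime_eq_iff S x (S.place x k).isLt k).mpr (by ext; rfl)
  -- |L| = i
  have hLcard : L.card = i := by
    have : L = Finset.image (S.place x)
        (Finset.univ.filter (fun k : Fin n => n - i ≤ k.val)) := by
      ext c
      simp only [hL, Finset.mem_filter, Finset.mem_univ, true_and, Finset.mem_image]
      constructor
      · intro hc
        obtain ⟨k, hk⟩ := hbij.surjective c
        refine ⟨k, ?_, hk⟩
        have := hft k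
        rw [hk] at this
        omega
      · rintro ⟨k, hk1, rfl⟩
        rw [hft k]; exact hk1
    rw [this, Finset.card_image_of_injective _ (S.inj x)]
    have : (Finset.univ.filter (fun k : Fin n => n - i ≤ k.val)).card =
        ((Finset.range n).filter (fun k => n - i ≤ k)).card := by
      apply Finset.card_bij (fun k _ => k.val)
      · intro k hk
        simp only [Finset.mem_filter, Finset.mem_univ, true_and] at hk
        simp only [Finset.mem_filter, Finset.mem_range]
        exact ⟨k.isLt, hk⟩
      · intro a ha b hb h
        exact Fin.ext h
      · intro b hb
        simp only [Finset.mem_filter, Finset.mem_range] at hb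
        exact ⟨⟨b, hb.1⟩, by simp only [Finset.mem_filter, Finset.mem_univ, true_and]; exact hb.2, rfl⟩
    rw [this]
    have : (Finset.range n).filter (fun k => n - i ≤ k) = Finset.Ico (n - i) n := by
      ext k; simp [Finset.mem_Ico, Finset.mem_range]; omega
    rw [this, Nat.card_Ico]
    omega
  -- the 2-to-1 map from late cells to bad pairs
  have hmap : ∀ c ∈ L, (⟨min c.val (n - 2), by omega⟩ : Fin (n - 1)) ∈ B := by
    intro c hc
    simp only [hL, Finset.mem_filter, Finset.mem_univ, true_and] at hc
    simp only [hB, Finset.mem_filter, Finset.mem_univ, true_and]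
    rcases le_or_gt c.val (n - 2) with h | h
    · left
      have : min c.val (n - 2) = c.val := min_eq_left h
      rw [this]; exact hc
    · right
      have hc1 : c.val = n - 1 := by have := c.isLt; omega
      have : min c.val (n - 2) = n - 2 := min_eq_right (by omega)
      rw [this]
      have : n - 2 + 1 = c.val := by omega
      rw [this]; exact hc
  have hfiber : ∀ j ∈ B, (L.filter (fun c =>
      (⟨min c.val (n - 2), by omega⟩ : Fin (n - 1)) = j)).card ≤ 2 := by
    intro j _
    have hsub : L.filter (fun c => (⟨min c.val (n - 2), by omega⟩ : Fin (n - 1)) = j) ⊆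
        {(⟨j.val, by have := j.isLt; omega⟩ : Fin n),
         ⟨j.val + 1, by have := j.isLt; omega⟩} := by
      intro c hc
      simp only [Finset.mem_filter] at hc
      have hval : min c.val (n - 2) = j.val := congrArg Fin.val hc.2
      have hcn := c.isLt
      simp only [Finset.mem_insert, Finset.mem_singleton]
      rcases le_or_gt c.val (n - 2) with h | h
      · left; ext; simp; omega
      · right; ext; simp; omega
    calc (L.filter _).card ≤ _ := Finset.card_le_card hsub
      _ ≤ 2 := Finset.card_insert_le _ _ |>.trans (by simp)
  have := Finset.card_le_mul_card_image_of_maps_to hmap 2 hfiber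
  omega

instance uniformCube_isProbability (n : ℕ) : IsProbabilityMeasure (uniformCube n) := by
  have : IsProbabilityMeasure ((volume : Measure ℝ).restrict (Set.Icc 0 1)) := by
    constructor
    rw [Measure.restrict_apply_univ, Real.volume_Icc]
    norm_num
  unfold uniformCube
  infer_instance

instance uniformFin_sfinite (m : ℕ) : SFinite (uniformFin m) := by
  unfold uniformFin
  infer_instance

/-- For a uniformly random adjacent pair `(j, j+1)` and a random input: with
probability `Ω(i/n)`, one of the two cells is still empty after the `(n-i)`-th
insertion (i.e. its 1-indexed fill time exceeds `n-i`). -/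
theorem adjacent_pair_late_fill_prob :
    ∃ c : ℝ, 0 < c ∧ ∀ n : ℕ, 2 ≤ n → ∀ S : OnlineStrategy n, ∀ i : ℕ, 1 ≤ i → i ≤ n →
      ENNReal.ofReal (c * (i : ℝ) / (n : ℝ)) ≤
        ((uniformCube n).prod (uniformFin (n - 1)))
          {p | n - i ≤ fillTime S p.1 (p.2 : ℕ) ∨ n - i ≤ fillTime S p.1 ((p.2 : ℕ) + 1)} := by
  classical
  refine ⟨1/2, by norm_num, fun n hn S i hi1 hin => ?_⟩
  set A : Set ((Fin n → ℝ) × Fin (n - 1)) :=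
    {p | n - i ≤ fillTime S p.1 (p.2 : ℕ) ∨ n - i ≤ fillTime S p.1 ((p.2 : ℕ) + 1)} with hAdef
  set C : Fin (n - 1) → Set (Fin n → ℝ) := fun j =>
    {x | n - i ≤ fillTime S x (j : ℕ) ∨ n - i ≤ fillTime S x ((j : ℕ) + 1)} with hCdef
  have hCmeas : ∀ j, MeasurableSet (C j) := by
    intro j
    apply MeasurableSet.union
    · exact measurableSet_le measurable_const (measurable_fillTime S _)
    · exact measurableSet_le measurable_const (measurable_fillTime S _)
  have hA : MeasurableSet A := by
    have : A = ⋃ j : Fin (n - 1), (C j) ×ˢ ({j} : Set (Fin (n - 1))) := by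
      ext ⟨x, j⟩
      simp only [hAdef, hCdef, Set.mem_setOf_eq, Set.mem_iUnion, Set.mem_prod,
        Set.mem_singleton_iff]
      constructor
      · intro h; exact ⟨j, h, rfl⟩
      · rintro ⟨j', h, rfl⟩; exact h
    rw [this]
    exact MeasurableSet.iUnion fun j => (hCmeas j).prod (measurableSet_singleton j)
  rw [Measure.prod_apply hA]
  -- pointwise lower bound on the inner measure
  have key : ∀ x : Fin n → ℝ, ENNReal.ofReal (1/2 * (i : ℝ) / (n : ℝ)) ≤
      uniformFin (n - 1) (Prod.mk x ⁻¹' A) := by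
    intro x
    set B := Finset.univ.filter (fun j : Fin (n - 1) =>
      n - i ≤ fillTime S x (j : ℕ) ∨ n - i ≤ fillTime S x ((j : ℕ) + 1)) with hBdef
    have hpre : Prod.mk x ⁻¹' A = ↑B := by
      ext j
      simp [hAdef, hBdef]
    rw [hpre]
    have hcard : i ≤ 2 * B.card := card_bad_pairs hn S x hi1 hin
    rw [uniformFin, Measure.smul_apply, smul_eq_mul, Measure.count_apply_finset]
    -- now a real/ENNReal computation
    have hn1 : (0 : ℝ) < (n - 1 : ℕ) := by
      have : 1 ≤ n - 1 := by omega
      exact_mod_cast Nat.lt_of_lt_of_le Nat.zero_lt_one this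
    have hreal : 1/2 * (i : ℝ) / (n : ℝ) ≤ (B.card : ℝ) / ((n - 1 : ℕ) : ℝ) := by
      rw [div_le_div_iff₀ (by positivity) hn1]
      have h1 : (i : ℝ) ≤ 2 * (B.card : ℝ) := by exact_mod_cast hcard
      have h2 : ((n - 1 : ℕ) : ℝ) ≤ (n : ℝ) := by
        have : (n - 1 : ℕ) ≤ n := Nat.sub_le n 1
        exact_mod_cast this
      have h3 : (0 : ℝ) < n := by positivity
      nlinarith
    calc ENNReal.ofReal (1/2 * (i : ℝ) / (n : ℝ))
        ≤ ENNReal.ofReal ((B.card : ℝ) / ((n - 1 : ℕ) : ℝ)) := ENNReal.ofReal_le_ofReal hreal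
      _ = ENNReal.ofReal (B.card : ℝ) / ENNReal.ofReal ((n - 1 : ℕ) : ℝ) :=
          ENNReal.ofReal_div_of_pos hn1
      _ = (B.card : ℝ≥0∞) / ((n - 1 : ℕ) : ℝ≥0∞) := by
          rw [ENNReal.ofReal_natCast, ENNReal.ofReal_natCast]
      _ = ((n - 1 : ℕ) : ℝ≥0∞)⁻¹ * (B.card : ℝ≥0∞) := by
          rw [div_eq_mul_inv, mul_comm]
  calc ENNReal.ofReal (1/2 * (i : ℝ) / (n : ℝ))
      = ∫⁻ _, ENNReal.ofReal (1/2 * (i : ℝ) / (n : ℝ)) ∂(uniformCube n) := by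
        rw [lintegral_const, measure_univ, mul_one]
    _ ≤ ∫⁻ x, uniformFin (n - 1) (Prod.mk x ⁻¹' A) ∂(uniformCube n) := lintegral_mono key
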